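/- arXiv:1502.04779 — 8 statements merged into one kernel-verified Lean document; each statement's English description precedes it below -/
import Mathlib

section
/- Let G be a finite group of order n and let μ be a fuzzy subgroup of G. Then there exists a least positive integer m such that μ(xᵐ) = μ(e) for all x ∈ G (where e is the identity of G), and this least positive integer m divides n. -/
/-- A fuzzy subgroup of a group `G`: a function `μ : G → ℝ` valued in `[0,1]`
with `μ (x*y) ≥ min (μ x) (μ y)` and `μ x⁻¹ ≥ μ x`. -/
def IsFuzzySubgroup {G : Type*} [Group G] (μ : G → ℝ) : Prop :=
  (∀ x : G, 0 ≤ μ x ∧ μ x ≤ 1) ∧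
  (∀ x y : G, μ (x * y) ≥ min (μ x) (μ y)) ∧
  (∀ x : G, μ x⁻¹ ≥ μ x)

theorem stmt_0 {G : Type*} [Group G] [Finite G] (n : ℕ) (hn : Nat.card G = n)
    (μ : G → ℝ) (hμ : IsFuzzySubgroup μ) :
    ∃ m : ℕ, IsLeast {m : ℕ | 0 < m ∧ ∀ x : G, μ (x ^ m) = μ 1} m ∧ m ∣ n := by
  obtain ⟨hbd, hmul, hinv⟩ := hμ
  have hmax : ∀ x : G, μ x ≤ μ 1 := by
    intro x
    have h1 : μ (x * x⁻¹) ≥ min (μ x) (μ x⁻¹) := hmul x x⁻¹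
    rw [mul_inv_cancel] at h1
    exact le_trans (le_min le_rfl (hinv x)) h1
  have hnpos : 0 < n := hn ▸ Nat.card_pos
  have hnS : 0 < n ∧ ∀ x : G, μ (x ^ n) = μ 1 := by
    refine ⟨hnpos, fun x => ?_⟩
    rw [← hn, pow_card_eq_one']
  set S : Set ℕ := {m : ℕ | 0 < m ∧ ∀ x : G, μ (x ^ m) = μ 1} with hS
  have hne : ∃ m, m ∈ S := ⟨n, hnS⟩
  classical
  set m := Nat.find hne with hm
  have hmS : m ∈ S := Nat.find_spec hne
  have hleast : IsLeast S m := ⟨hmS, fun k hk => Nat.find_min' hne hk⟩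
  refine ⟨m, hleast, ?_⟩
  set r := n % m with hr
  set q := n / m with hq
  have hdm : m * q + r = n := Nat.div_add_mod n m
  have hrS : ∀ x : G, μ (x ^ r) = μ 1 := by
    intro x
    have h1 : μ ((x ^ q) ^ m) = μ 1 := hmS.2 (x ^ q)
    have h2 : μ (x ^ (m * q)) = μ 1 := by rwa [pow_mul']
    have h3 : μ ((x ^ (m * q))⁻¹) = μ 1 :=
      le_antisymm (hmax _) (h2 ▸ hinv _)
    have h4 : x ^ r = (x ^ (m * q))⁻¹ * x ^ n := by
      rw [← hdm, pow_add]; group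
    have h5 : μ ((x ^ (m * q))⁻¹ * x ^ n) ≥ min (μ ((x ^ (m * q))⁻¹)) (μ (x ^ n)) :=
      hmul _ _
    rw [h3, hnS.2 x, min_self] at h5
    rw [h4]
    exact le_antisymm (hmax _) h5
  have hr0 : r = 0 := by
    by_contra h
    have hrpos : 0 < r := Nat.pos_of_ne_zero h
    have : m ≤ r := hleast.2 ⟨hrpos, hrS⟩
    exact absurd (Nat.mod_lt n hmS.1) (not_lt.mpr this)
  exact ⟨q, by omega⟩
end

section
/- A finite group G of order n is cyclic if and only if for every positive divisor d of n there exists a fuzzy subgroup μ of G whose fuzzy order equals d, i.e., d is the least positive integer m such that μ(xᵐ) = μ(e) for all x ∈ G. -/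
/-! The fuzzy order of `μ` only depends on the subgroup `H = {x | μ x = μ e}`: it is the least
`m > 0` with `x ^ m ∈ H` for all `x`, i.e. the exponent of `G ⧸ H.normalCore`, and the indicator
of a normal subgroup `N` has fuzzy order `exponent (G ⧸ N)`. So the condition says that every
divisor of `n` is the exponent of a quotient of `G`.

A cyclic group has a quotient of every order `d ∣ n`, cyclic with exponent `d`. Conversely, a
quotient of exponent `p ^ a`, where `p ^ a` is the exact power of `p` dividing `n`, is a `p`-group
of order dividing `n`, hence cyclic of order `p ^ a`; its kernel has order prime to `p`. Every
commutator lies in all these kernels, so it is trivial, and an abelian group of exponent `n`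
(the case `d = n`) is cyclic. -/

open Monoid

namespace IsFuzzySubgroup

variable {G : Type*} [Group G] {μ : G → ℝ}

theorem apply_le_apply_one (hμ : IsFuzzySubgroup μ) (x : G) : μ x ≤ μ 1 :=
  calc μ x = min (μ x) (μ x) := (min_self _).symm
    _ ≤ min (μ x) (μ x⁻¹) := min_le_min le_rfl (hμ.2.2 x)
    _ ≤ μ (x * x⁻¹) := hμ.2.1 x x⁻¹
    _ = μ 1 := by rw [mul_inv_cancel]

def topLevelSubgroup (hμ : IsFuzzySubgroup μ) : Subgroup G where
  carrier := {x | μ x = μ 1}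
  one_mem' := rfl
  mul_mem' := fun {a b} (ha : μ a = μ 1) (hb : μ b = μ 1) =>
    (hμ.apply_le_apply_one _).antisymm <| by simpa only [ha, hb, min_self] using hμ.2.1 a b
  inv_mem' := fun {a} (ha : μ a = μ 1) =>
    (hμ.apply_le_apply_one _).antisymm <| ha.ge.trans (hμ.2.2 a)

theorem mem_topLevelSubgroup (hμ : IsFuzzySubgroup μ) {x : G} :
    x ∈ hμ.topLevelSubgroup ↔ μ x = μ 1 :=
  Iff.rfl

end IsFuzzySubgroup

section Indicator

variable {G : Type*} [Group G]

theorem isFuzzySubgroup_indicator (H : Subgroup G) :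
    IsFuzzySubgroup ((H : Set G).indicator (1 : G → ℝ)) := by
  refine ⟨fun x => ?_, fun x y => ?_, fun x => ?_⟩
  · by_cases hx : x ∈ H <;> simp [hx]
  · by_cases hx : x ∈ H <;> by_cases hy : y ∈ H
    · simp [hx, hy, H.mul_mem hx hy]
    all_goals
      simpa [hx, hy] using Set.indicator_nonneg (f := (1 : G → ℝ)) (fun _ _ => zero_le_one) _
  · by_cases hx : x ∈ H <;> simp [hx]

theorem indicator_eq_indicator_one_iff (H : Subgroup G) {x : G} :
    (H : Set G).indicator (1 : G → ℝ) x = (H : Set G).indicator 1 1 ↔ x ∈ H := by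
  by_cases hx : x ∈ H <;> simp [hx]

end Indicator

section Exponent

variable {G : Type*} [Group G]

theorem Subgroup.forall_pow_mem_normalCore_iff (H : Subgroup G) (m : ℕ) :
    (∀ x : G, x ^ m ∈ H.normalCore) ↔ ∀ x : G, x ^ m ∈ H := by
  refine ⟨fun h x => H.normalCore_le (h x), fun h x b => ?_⟩
  simpa only [conj_pow] using h (b * x * b⁻¹)

theorem QuotientGroup.exponent_dvd_iff_forall_pow_mem (N : Subgroup G) [N.Normal] (m : ℕ) :
    exponent (G ⧸ N) ∣ m ↔ ∀ x : G, x ^ m ∈ N := by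
  rw [exponent_dvd_iff_forall_pow_eq_one, (QuotientGroup.mk_surjective).forall]
  simp only [← QuotientGroup.mk_pow, QuotientGroup.eq_one_iff]

theorem QuotientGroup.isLeast_exponent [Finite G] (N : Subgroup G) [N.Normal] :
    IsLeast {m : ℕ | 0 < m ∧ ∀ x : G, x ^ m ∈ N} (exponent (G ⧸ N)) := by
  simp only [← QuotientGroup.exponent_dvd_iff_forall_pow_mem]
  exact ⟨⟨Nat.pos_of_ne_zero exponent_ne_zero_of_finite, dvd_rfl⟩,
    fun m ⟨hm, hdvd⟩ => Nat.le_of_dvd hm hdvd⟩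

end Exponent

section FuzzyOrder

variable {G : Type*} [Group G] [Finite G]

theorem IsFuzzySubgroup.isLeast_exponent_quotient_normalCore {μ : G → ℝ}
    (hμ : IsFuzzySubgroup μ) :
    IsLeast {m : ℕ | 0 < m ∧ ∀ x : G, μ (x ^ m) = μ 1}
      (exponent (G ⧸ hμ.topLevelSubgroup.normalCore)) := by
  simpa only [Subgroup.forall_pow_mem_normalCore_iff, hμ.mem_topLevelSubgroup]
    using QuotientGroup.isLeast_exponent hμ.topLevelSubgroup.normalCore

theorem exists_isFuzzySubgroup_isLeast_iff (d : ℕ) :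
    (∃ μ : G → ℝ, IsFuzzySubgroup μ ∧ IsLeast {m : ℕ | 0 < m ∧ ∀ x : G, μ (x ^ m) = μ 1} d) ↔
      ∃ (N : Subgroup G) (_ : N.Normal), exponent (G ⧸ N) = d := by
  constructor
  · rintro ⟨μ, hμ, hd⟩
    exact ⟨_, inferInstance, hμ.isLeast_exponent_quotient_normalCore.unique hd⟩
  · rintro ⟨N, _, rfl⟩
    refine ⟨_, isFuzzySubgroup_indicator N, ?_⟩
    simpa only [indicator_eq_indicator_one_iff] using QuotientGroup.isLeast_exponent N

end FuzzyOrder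

section Commutativity

variable {G : Type*} [Group G]

theorem eq_one_of_forall_prime_exists_mem_not_dvd {x : G}
    (h : ∀ p, p.Prime → p ∣ Nat.card G → ∃ K : Subgroup G, x ∈ K ∧ ¬ p ∣ Nat.card K) :
    x = 1 := by
  rw [← orderOf_eq_one_iff, Nat.eq_one_iff_not_exists_prime_dvd]
  intro p hp hpx
  obtain ⟨K, hxK, hpK⟩ := h p hp (hpx.trans (orderOf_dvd_natCard x))
  exact hpK (hpx.trans (K.orderOf_dvd_natCard hxK))

theorem mul_comm_of_forall_prime_exists_commutative_quotient
    (h : ∀ p, p.Prime → p ∣ Nat.card G →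
      ∃ (N : Subgroup G) (_ : N.Normal), IsMulCommutative (G ⧸ N) ∧ ¬ p ∣ Nat.card N)
    (a b : G) : a * b = b * a := by
  rw [← inv_mul_eq_one]
  refine eq_one_of_forall_prime_exists_mem_not_dvd fun p hp hpG => ?_
  obtain ⟨N, _, _, hpN⟩ := h p hp hpG
  refine ⟨N, ?_, hpN⟩
  rw [← QuotientGroup.eq, QuotientGroup.mk_mul, QuotientGroup.mk_mul]
  exact mul_comm' _ _

end Commutativity

theorem isCyclic_and_card_eq_of_exponent_eq_ordProj {Q : Type*} [Group Q] [Finite Q] {n p : ℕ}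
    (hp : p.Prime) (hn : n ≠ 0) (hQ : Nat.card Q ∣ n) (hexp : exponent Q = p ^ n.factorization p) :
    IsCyclic Q ∧ Nat.card Q = p ^ n.factorization p := by
  have := Fact.mk hp
  obtain ⟨j, hj⟩ := IsPGroup.iff_card.mp (IsPGroup.of_exponent_dvd_pow hexp.dvd)
  have hjle : j ≤ n.factorization p := (hp.pow_dvd_iff_le_factorization hn).mp (hj ▸ hQ)
  have hlej : n.factorization p ≤ j :=
    (Nat.pow_dvd_pow_iff_le_right hp.one_lt).mp (hexp ▸ hj ▸ Group.exponent_dvd_nat_card)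
  have hcard : Nat.card Q = p ^ n.factorization p := by rw [hj, le_antisymm hjle hlej]
  obtain ⟨g, hg⟩ := hp.exists_orderOf_eq_pow_factorization_exponent Q
  rw [hexp, hp.factorization_pow, Finsupp.single_eq_same] at hg
  exact ⟨isCyclic_of_orderOf_eq_card g (hg.trans hcard.symm), hcard⟩

section Cyclic

variable {G : Type*} [Group G] [Finite G]

theorem IsCyclic.exists_normal_exponent_quotient_eq [IsCyclic G] {d : ℕ}
    (hd : d ∣ Nat.card G) : ∃ (N : Subgroup G) (_ : N.Normal), exponent (G ⧸ N) = d := by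
  obtain ⟨g, hg⟩ := IsCyclic.exists_ofOrder_eq_natCard (α := G)
  have hd0 : d ≠ 0 := ne_zero_of_dvd_ne_zero Nat.card_pos.ne' hd
  set N := Subgroup.zpowers (g ^ d)
  have hN : Nat.card N = Nat.card G / d := by
    rw [Nat.card_zpowers, orderOf_pow_of_dvd hd0 (hg ▸ hd), hg]
  have : IsCyclic (G ⧸ N) := isCyclic_of_surjective _ (QuotientGroup.mk'_surjective N)
  refine ⟨N, inferInstance, ?_⟩
  rw [IsCyclic.exponent_eq_card]
  refine Nat.eq_of_mul_eq_mul_right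
    (Nat.div_pos (Nat.le_of_dvd Nat.card_pos hd) (Nat.pos_of_ne_zero hd0)) ?_
  rw [← hN, ← N.card_eq_card_quotient_mul_card_subgroup, hN, Nat.mul_div_cancel' hd]

theorem isCyclic_of_forall_dvd_exists_exponent_quotient_eq
    (h : ∀ d, d ∣ Nat.card G → ∃ (N : Subgroup G) (_ : N.Normal), exponent (G ⧸ N) = d) :
    IsCyclic G := by
  have hn : Nat.card G ≠ 0 := Nat.card_pos.ne'
  have hcomm : ∀ a b : G, a * b = b * a := by
    refine mul_comm_of_forall_prime_exists_commutative_quotient fun p hp _ => ?_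
    obtain ⟨N, _, hexp⟩ := h _ (Nat.ordProj_dvd _ p)
    obtain ⟨_, hcard⟩ := isCyclic_and_card_eq_of_exponent_eq_ordProj hp hn
      (Dvd.intro _ N.card_eq_card_quotient_mul_card_subgroup.symm) hexp
    have hcardN : Nat.card G / p ^ (Nat.card G).factorization p = Nat.card N :=
      Nat.div_eq_of_eq_mul_right (pow_pos hp.pos _)
        (hcard ▸ N.card_eq_card_quotient_mul_card_subgroup)
    exact ⟨N, inferInstance, inferInstance, hcardN ▸ Nat.not_dvd_ordCompl hp hn⟩
  obtain ⟨N, _, hN⟩ := h _ dvd_rfl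
  have hexp : exponent G = Nat.card G :=
    Group.exponent_dvd_nat_card.antisymm (hN ▸ Group.exponent_quotient_dvd N)
  let : CommGroup G := { ‹Group G› with mul_comm := hcomm }
  exact IsCyclic.of_exponent_eq_card hexp

end Cyclic

theorem stmt_1 {G : Type*} [Group G] [Finite G] (n : ℕ) (hn : Nat.card G = n) :
    IsCyclic G ↔
      ∀ d : ℕ, 0 < d → d ∣ n →
        ∃ μ : G → ℝ, IsFuzzySubgroup μ ∧
          IsLeast {m : ℕ | 0 < m ∧ ∀ x : G, μ (x ^ m) = μ 1} d := by
  subst hn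
  simp only [exists_isFuzzySubgroup_isLeast_iff]
  refine ⟨fun _ d _ hd => IsCyclic.exists_normal_exponent_quotient_eq hd, fun h => ?_⟩
  exact isCyclic_of_forall_dvd_exists_exponent_quotient_eq fun d hd =>
    h d (Nat.pos_of_dvd_of_pos hd Nat.card_pos) hd
end

section
/- A finite group G of order n is cyclic if and only if for every positive divisor d of n there exists a subgroup H of G such that the exponent of G relative to H equals d, i.e., d is the least positive integer m such that xᵐ ∈ H for all x ∈ G. -/
/-!
Write `Gᵈ` for the subgroup generated by the `d`-th powers; it is normal. If `exp_H(G) = d`, then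
`Gᵈ ≤ H`, so `exp_{Gᵈ}(G) = d` as well, i.e. `G ⧸ Gᵈ` has exponent `d`. Let `p` be the least prime
factor of `n = |G|` and `m = n / p`. Then `m` divides `|G ⧸ Gᵐ|`, which divides `n`, and `Gᵐ ≠ 1`
since `G` has exponent `n`; hence `|Gᵐ| = p`. As `|Aut Gᵐ| = p - 1` is prime to `n`, `Gᵐ` is
central, and `G ⧸ Gᵐ` inherits the hypothesis, so it is cyclic by induction. Thus `G` is abelian
of exponent `n`, i.e. cyclic. Conversely, for cyclic `G` the quotient `G ⧸ Gᵈ` is cyclic of order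
`d`.
-/

open Subgroup

section

variable {G : Type*} [Group G]

def powerSubgroup (G : Type*) [Group G] (d : ℕ) : Subgroup G :=
  closure (Set.range (· ^ d))

lemma pow_mem_powerSubgroup (d : ℕ) (x : G) : x ^ d ∈ powerSubgroup G d :=
  subset_closure ⟨x, rfl⟩

lemma powerSubgroup_le_iff {d : ℕ} {H : Subgroup G} :
    powerSubgroup G d ≤ H ↔ ∀ x : G, x ^ d ∈ H := by
  rw [powerSubgroup, closure_le, Set.range_subset_iff]; rfl

lemma powerSubgroup_le_of_dvd {d k : ℕ} (h : d ∣ k) : powerSubgroup G k ≤ powerSubgroup G d := by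
  obtain ⟨c, rfl⟩ := h
  exact powerSubgroup_le_iff.mpr fun x ↦ by
    rw [mul_comm, pow_mul]; exact pow_mem_powerSubgroup d _

instance powerSubgroup_normal (d : ℕ) : (powerSubgroup G d).Normal := by
  refine ⟨fun x hx g ↦ ?_⟩
  induction hx using closure_induction with
  | mem _ h =>
    obtain ⟨y, rfl⟩ := h
    simpa only [conj_pow] using pow_mem_powerSubgroup d (g * y * g⁻¹)
  | one => simp
  | mul a b _ _ ha hb => simpa only [mul_assoc, inv_mul_cancel_left] using mul_mem ha hb
  | inv a _ ha => simpa only [conj_inv] using inv_mem ha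

/-- `exp_H(G)` is the least element of this set. -/
def relExponentSet (H : Subgroup G) : Set ℕ := {m | 0 < m ∧ ∀ x : G, x ^ m ∈ H}

lemma relExponentSet_map_mk {N H : Subgroup G} [N.Normal] (hNH : N ≤ H) :
    relExponentSet (H.map (QuotientGroup.mk' N)) = relExponentSet H := by
  ext m
  refine and_congr_right fun _ ↦ ?_
  rw [QuotientGroup.mk'_surjective N |>.forall]
  refine forall_congr' fun x ↦ ?_
  rw [← map_pow, ← mem_comap, comap_map_eq, QuotientGroup.ker_mk', sup_eq_left.mpr hNH]

lemma isLeast_relExponentSet_exponent [Finite G] (N : Subgroup G) [N.Normal] :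
    IsLeast (relExponentSet N) (Monoid.exponent (G ⧸ N)) := by
  have hmem (m : ℕ) : (∀ x : G, x ^ m ∈ N) ↔ ∀ q : G ⧸ N, q ^ m = 1 := by
    rw [QuotientGroup.mk_surjective.forall]
    simp only [← QuotientGroup.mk_pow, QuotientGroup.eq_one_iff]
  exact ⟨⟨Monoid.exponent_pos.mpr Monoid.ExponentExists.of_finite,
    (hmem _).mpr Monoid.pow_exponent_eq_one⟩,
    fun m ⟨hm, hpow⟩ ↦
      Nat.le_of_dvd hm (Monoid.exponent_dvd_of_forall_pow_eq_one ((hmem m).mp hpow))⟩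

lemma exponent_quotient_powerSubgroup_of_isLeast [Finite G] {H : Subgroup G} {d : ℕ}
    (hd : IsLeast (relExponentSet H) d) : Monoid.exponent (G ⧸ powerSubgroup G d) = d := by
  have hK := isLeast_relExponentSet_exponent (powerSubgroup G d)
  have hKH : powerSubgroup G d ≤ H := powerSubgroup_le_iff.mpr hd.1.2
  exact le_antisymm (hK.2 ⟨hd.1.1, pow_mem_powerSubgroup d⟩) (hd.2 ⟨hK.1.1, fun x ↦ hKH (hK.1.2 x)⟩)

lemma exponent_eq_card_of_isLeast [Finite G] {H : Subgroup G}
    (h : IsLeast (relExponentSet H) (Nat.card G)) : Monoid.exponent G = Nat.card G := by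
  refine le_antisymm (Nat.le_of_dvd Nat.card_pos Group.exponent_dvd_nat_card) (h.2 ⟨?_, fun x ↦ ?_⟩)
  · exact Monoid.exponent_pos.mpr Monoid.ExponentExists.of_finite
  · rw [Monoid.pow_exponent_eq_one]; exact H.one_mem

lemma MonoidHom.eq_one_of_coprime_card {G' : Type*} [Group G'] [Finite G] [Finite G'] (f : G →* G')
    (h : (Nat.card G).Coprime (Nat.card G')) : f = 1 := by
  rw [← MonoidHom.range_eq_bot_iff, ← card_eq_one]
  exact Nat.eq_one_of_dvd_coprimes h (card_range_dvd f) (card_subgroup_dvd_card _)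

lemma le_center_of_card_eq_minFac [Finite G] (N : Subgroup G) [N.Normal]
    (hN : Nat.card N = (Nat.card G).minFac) : N ≤ center G := by
  rcases eq_or_ne (Nat.card G) 1 with hG | hG
  · rw [hG, Nat.minFac_one, card_eq_one] at hN
    exact hN ▸ bot_le
  have hp := Nat.minFac_prime hG
  have : Fact (Nat.card N).Prime := ⟨hN ▸ hp⟩
  have : IsCyclic N := isCyclic_of_prime_card rfl
  have hconj : (MulAut.conjNormal : G →* MulAut N) = 1 := by
    refine MonoidHom.eq_one_of_coprime_card _ ?_
    rw [IsCyclic.card_mulAut, hN, Nat.totient_prime hp]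
    have := hp.two_le
    exact Nat.coprime_of_lt_minFac (by omega) (by omega)
  intro x hx
  rw [mem_center_iff]
  intro g
  have hfix : g * x * g⁻¹ = x := by
    simpa using congrArg Subtype.val (DFunLike.congr_fun (DFunLike.congr_fun hconj g) ⟨x, hx⟩)
  exact mul_inv_eq_iff_eq_mul.mp hfix

lemma isCyclic_of_exponent_eq_card_of_le_center [Finite G] (N : Subgroup G) [N.Normal]
    [IsCyclic (G ⧸ N)] (hN : N ≤ center G) (hG : Monoid.exponent G = Nat.card G) : IsCyclic G := by
  let := commGroupOfCyclicCenterQuotient (QuotientGroup.mk' N) (by rwa [QuotientGroup.ker_mk'])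
  exact IsCyclic.of_exponent_eq_card hG

lemma card_powerSubgroup_eq_of_exponent [Finite G] {p m : ℕ} (hp : p.Prime)
    (hpm : Nat.card G = p * m) (hG : Monoid.exponent G = Nat.card G)
    (hm : Monoid.exponent (G ⧸ powerSubgroup G m) = m) :
    Nat.card (powerSubgroup G m) = p := by
  have hm0 : 0 < m := Nat.pos_of_mul_pos_left (hpm ▸ Nat.card_pos (α := G))
  obtain ⟨t, ht⟩ : m ∣ (powerSubgroup G m).index := by
    have := Group.exponent_dvd_nat_card (G := G ⧸ powerSubgroup G m)
    rwa [hm, ← index_eq_card] at this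
  have hcard : Nat.card (powerSubgroup G m) * t = p := by
    have := card_mul_index (powerSubgroup G m)
    rw [ht, hpm] at this
    exact Nat.eq_of_mul_eq_mul_right hm0 (by linarith)
  rcases (Nat.dvd_prime hp).mp (Dvd.intro t hcard) with h1 | hp'
  · exfalso
    have hbot : ∀ x : G, x ^ m = 1 := fun x ↦ by
      simpa [card_eq_one.mp h1] using pow_mem_powerSubgroup m x
    have := Nat.le_of_dvd hm0 (hpm ▸ hG ▸ Monoid.exponent_dvd_of_forall_pow_eq_one hbot)
    nlinarith [hp.two_le]
  · exact hp'

theorem isCyclic_of_forall_exists_isLeast_relExponentSet [Finite G]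
    (h : ∀ d, 0 < d → d ∣ Nat.card G → ∃ H : Subgroup G, IsLeast (relExponentSet H) d) :
    IsCyclic G := by
  induction hn : Nat.card G using Nat.strong_induction_on generalizing G with
  | _ n ih =>
  subst hn
  rcases eq_or_ne (Nat.card G) 1 with h1 | h1
  · have := (Nat.card_eq_one_iff_unique.mp h1).1
    infer_instance
  have hp : (Nat.card G).minFac.Prime := Nat.minFac_prime h1
  set p := (Nat.card G).minFac
  set m := Nat.card G / p
  have hpm : Nat.card G = p * m := (Nat.mul_div_cancel' (Nat.minFac_dvd _)).symm
  have hmn : m ∣ Nat.card G := Dvd.intro_left p hpm.symm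
  have hG : Monoid.exponent G = Nat.card G :=
    have ⟨_, hH⟩ := h _ Nat.card_pos dvd_rfl
    exponent_eq_card_of_isLeast hH
  have hm : Monoid.exponent (G ⧸ powerSubgroup G m) = m :=
    have ⟨_, hH⟩ := h m (Nat.div_pos (Nat.minFac_le Nat.card_pos) hp.pos) hmn
    exponent_quotient_powerSubgroup_of_isLeast hH
  have hN : Nat.card (powerSubgroup G m) = p := card_powerSubgroup_eq_of_exponent hp hpm hG hm
  have hQ : Nat.card (G ⧸ powerSubgroup G m) = m := by
    have := card_mul_index (powerSubgroup G m)
    rw [hN, hpm, index_eq_card] at this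
    exact Nat.eq_of_mul_eq_mul_left hp.pos this
  have : IsCyclic (G ⧸ powerSubgroup G m) := by
    refine ih m (Nat.div_lt_self Nat.card_pos hp.one_lt) (fun d hd hdm ↦ ?_) hQ
    rw [hQ] at hdm
    obtain ⟨H, hH⟩ := h d hd (hdm.trans hmn)
    have hNH : powerSubgroup G m ≤ H :=
      (powerSubgroup_le_of_dvd hdm).trans (powerSubgroup_le_iff.mpr hH.1.2)
    exact ⟨H.map (QuotientGroup.mk' _), relExponentSet_map_mk hNH ▸ hH⟩
  exact isCyclic_of_exponent_eq_card_of_le_center _ (le_center_of_card_eq_minFac _ hN) hG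

lemma IsCyclic.exponent_quotient_powerSubgroup [Finite G] [IsCyclic G] {d : ℕ}
    (hd : d ∣ Nat.card G) : Monoid.exponent (G ⧸ powerSubgroup G d) = d := by
  let := IsCyclic.commGroup (α := G)
  have hK : powerSubgroup G d = (powMonoidHom d : G →* G).range := by
    change closure (Set.range (powMonoidHom d : G →* G)) = _
    rw [← MonoidHom.coe_range, closure_eq]
  rw [IsCyclic.exponent_eq_card, ← index_eq_card, hK, IsCyclic.index_powMonoidHom_range,
    Nat.gcd_eq_right hd]

end

theorem stmt_2 {G : Type*} [Group G] [Finite G] (n : ℕ) (hn : Nat.card G = n) :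
    IsCyclic G ↔
      ∀ d : ℕ, 0 < d → d ∣ n →
        ∃ H : Subgroup G,
          IsLeast {m : ℕ | 0 < m ∧ ∀ x : G, x ^ m ∈ H} d := by
  subst hn
  refine ⟨fun _ d _ hd ↦ ⟨powerSubgroup G d, ?_⟩, isCyclic_of_forall_exists_isLeast_relExponentSet⟩
  have hK := isLeast_relExponentSet_exponent (powerSubgroup G d)
  rwa [IsCyclic.exponent_quotient_powerSubgroup hd] at hK
end

section
/- Let G be a finite group of order n such that for every positive divisor d of n there exists a fuzzy subgroup μ of G whose fuzzy order equals d. Then for every prime p, every Sylow p-subgroup of G is cyclic. -/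
section aux

variable {G : Type*} [Group G] {μ : G → ℝ} (hμ : IsFuzzySubgroup μ)
include hμ

lemma fuzzy_le_one (g : G) : μ g ≤ μ 1 := by
  have h1 := hμ.2.1 g g⁻¹
  rw [mul_inv_cancel] at h1
  exact le_trans (le_min le_rfl (hμ.2.2 g)) h1

lemma fuzzy_pow (g : G) : ∀ m : ℕ, μ g ≤ μ (g ^ m)
  | 0 => by simpa using fuzzy_le_one hμ g
  | (m+1) => by
      have := hμ.2.1 (g ^ m) g
      have ih := fuzzy_pow g m
      rw [pow_succ]
      exact le_trans (le_min ih le_rfl) this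

lemma fuzzy_zpow (g : G) (m : ℤ) : μ g ≤ μ (g ^ m) := by
  rcases m with m | m
  · simpa using fuzzy_pow hμ g m
  · rw [zpow_negSucc]
    exact (fuzzy_pow hμ g (m + 1)).trans (hμ.2.2 _)

lemma fuzzy_gcd {a b : ℕ} {x : G} (ha : μ (x ^ a) = μ 1) (hb : μ (x ^ b) = μ 1) :
    μ (x ^ Nat.gcd a b) = μ 1 := by
  refine le_antisymm (fuzzy_le_one hμ _) ?_
  have key : (x : G) ^ (Nat.gcd a b : ℤ) = (x ^ a) ^ Nat.gcdA a b * (x ^ b) ^ Nat.gcdB a b := by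
    rw [← zpow_natCast x a, ← zpow_natCast x b, ← zpow_mul, ← zpow_mul, ← zpow_add,
      ← Nat.gcd_eq_gcd_ab]
  have h1 : μ 1 ≤ μ ((x ^ a) ^ Nat.gcdA a b) := ha ▸ fuzzy_zpow hμ (x ^ a) _
  have h2 : μ 1 ≤ μ ((x ^ b) ^ Nat.gcdB a b) := hb ▸ fuzzy_zpow hμ (x ^ b) _
  have := hμ.2.1 ((x ^ a) ^ Nat.gcdA a b) ((x ^ b) ^ Nat.gcdB a b)
  rw [← key, zpow_natCast] at this
  exact le_trans (le_min h1 h2) this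

end aux

theorem stmt_3 {G : Type*} [Group G] [Finite G] (n : ℕ) (hn : Nat.card G = n)
    (h : ∀ d : ℕ, 0 < d → d ∣ n →
      ∃ μ : G → ℝ, IsFuzzySubgroup μ ∧
        IsLeast {m : ℕ | 0 < m ∧ ∀ x : G, μ (x ^ m) = μ 1} d) :
    ∀ p : ℕ, p.Prime → ∀ P : Sylow p G, IsCyclic P := by
  have hn0 : 0 < n := hn ▸ Nat.card_pos
  obtain ⟨μ, hμ, hle⟩ := h n hn0 dvd_rfl
  -- the exponent is in the set
  have hexp_pos : 0 < Monoid.exponent G := Monoid.ExponentExists.exponent_pos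
    (Monoid.ExponentExists.of_finite)
  have hexp_mem : Monoid.exponent G ∈ {m : ℕ | 0 < m ∧ ∀ x : G, μ (x ^ m) = μ 1} :=
    ⟨hexp_pos, fun x => by rw [Monoid.pow_exponent_eq_one]⟩
  -- n divides the exponent
  have hgcd_mem : Nat.gcd n (Monoid.exponent G) ∈
      {m : ℕ | 0 < m ∧ ∀ x : G, μ (x ^ m) = μ 1} := by
    refine ⟨Nat.gcd_pos_of_pos_left _ hn0, fun x => ?_⟩
    exact fuzzy_gcd hμ (hle.1.2 x) (hexp_mem.2 x)
  have hdvd : n ∣ Monoid.exponent G := by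
    have h1 : n ≤ Nat.gcd n (Monoid.exponent G) := hle.2 hgcd_mem
    have h2 : Nat.gcd n (Monoid.exponent G) ≤ n := Nat.le_of_dvd hn0 (Nat.gcd_dvd_left _ _)
    have h3 : Nat.gcd n (Monoid.exponent G) = n := le_antisymm h2 h1
    exact h3 ▸ Nat.gcd_dvd_right _ _
  have hexp_eq : Monoid.exponent G = n := by
    refine Nat.dvd_antisymm ?_ hdvd
    exact hn ▸ Group.exponent_dvd_nat_card
  intro p hp P
  haveI : Fact p.Prime := ⟨hp⟩
  obtain ⟨g, hg⟩ := hp.exists_orderOf_eq_pow_factorization_exponent G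
  have hcard : Nat.card (Subgroup.zpowers g) = p ^ (Nat.card G).factorization p := by
    rw [Nat.card_zpowers, hg, hexp_eq, hn]
  let Q : Sylow p G := Sylow.ofCard (Subgroup.zpowers g) hcard
  have hQ : IsCyclic Q := by
    have : Q.toSubgroup = Subgroup.zpowers g := Sylow.coe_ofCard _ hcard
    rw [show (Q : Subgroup G) = Subgroup.zpowers g from this]
    refine ⟨⟨⟨g, Subgroup.mem_zpowers g⟩, fun x => ?_⟩⟩
    obtain ⟨k, hk⟩ := x.2
    exact ⟨k, Subtype.ext (by simpa using hk)⟩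
  have e : Q ≃* P := Sylow.equiv Q P
  exact isCyclic_of_surjective e.toMonoidHom e.surjective
end

section
/- Let G be a finite group of order n such that for every positive divisor d of n there exists a subgroup H of G with exp_H(G) = d (i.e., d is the least positive integer m such that xᵐ ∈ H for all x ∈ G). Then for every prime p, every Sylow p-subgroup of G is cyclic. -/
theorem stmt_4 {G : Type*} [Group G] [Finite G] (n : ℕ) (hn : Nat.card G = n)
    (h : ∀ d : ℕ, 0 < d → d ∣ n →
      ∃ H : Subgroup G, IsLeast {m : ℕ | 0 < m ∧ ∀ x : G, x ^ m ∈ H} d) :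
    ∀ p : ℕ, p.Prime → ∀ P : Sylow p G, IsCyclic P := by
  intro p hp P
  haveI : Fact p.Prime := ⟨hp⟩
  set k := n.factorization p with hk
  have hnpos : 0 < n := hn ▸ Nat.card_pos
  have hdvd : p ^ k ∣ n := Nat.ordProj_dvd n p
  obtain ⟨H, hHmem, hHle⟩ := h (p ^ k) (pow_pos hp.pos k) hdvd
  -- exponent of G lies in the set
  have hexp_pos : 0 < Monoid.exponent G := Nat.pos_of_ne_zero Monoid.exponent_ne_zero_of_finite
  have hexp_mem : Monoid.exponent G ∈ {m : ℕ | 0 < m ∧ ∀ x : G, x ^ m ∈ H} :=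
    ⟨hexp_pos, fun x => by rw [Monoid.pow_exponent_eq_one]; exact H.one_mem⟩
  -- p ^ k divides the exponent via the gcd trick
  have hdvd_exp : p ^ k ∣ Monoid.exponent G := by
    set d := p ^ k with hd
    set e := Monoid.exponent G with he
    have hgcd_mem : Nat.gcd d e ∈ {m : ℕ | 0 < m ∧ ∀ x : G, x ^ m ∈ H} := by
      refine ⟨Nat.gcd_pos_of_pos_left _ hHmem.1, fun x => ?_⟩
      have hb := Nat.gcd_eq_gcd_ab d e
      have hx : x ^ Nat.gcd d e =
          (x ^ d) ^ (Nat.gcdA d e) * (x ^ e) ^ (Nat.gcdB d e) := by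
        rw [← zpow_natCast x, hb, zpow_add, zpow_mul, zpow_mul, zpow_natCast, zpow_natCast]
      rw [hx]
      exact H.mul_mem (H.zpow_mem (hHmem.2 x) _) (H.zpow_mem (hexp_mem.2 x) _)
    have h1 : d ≤ Nat.gcd d e := hHle hgcd_mem
    have h2 : Nat.gcd d e ∣ d := Nat.gcd_dvd_left d e
    have : Nat.gcd d e = d := le_antisymm (Nat.le_of_dvd hHmem.1 h2) h1
    exact this ▸ Nat.gcd_dvd_right d e
  -- there is an element of order p ^ k
  have hexp_dvd_n : Monoid.exponent G ∣ n := hn ▸ Group.exponent_dvd_nat_card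
  have hfac : (Monoid.exponent G).factorization p = k := by
    have h1 : k ≤ (Monoid.exponent G).factorization p :=
      (Nat.Prime.pow_dvd_iff_le_factorization hp hexp_pos.ne').mp hdvd_exp
    have h2 : (Monoid.exponent G).factorization p ≤ k :=
      (Nat.factorization_le_iff_dvd hexp_pos.ne' hnpos.ne').mpr hexp_dvd_n p
    exact le_antisymm h2 h1
  obtain ⟨g, hg⟩ := hp.exists_orderOf_eq_pow_factorization_exponent (G := G)
  rw [hfac] at hg
  -- zpowers g is a Sylow p-subgroup
  have hpg : IsPGroup p (Subgroup.zpowers g) := by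
    apply IsPGroup.of_card
    rw [Nat.card_zpowers, hg]
  obtain ⟨Q, hQ⟩ := hpg.exists_le_sylow
  have hcardQ : Nat.card Q = p ^ k := by rw [Q.card_eq_multiplicity, hn]
  have hQeq : Subgroup.zpowers g = Q.toSubgroup := by
    apply Subgroup.eq_of_le_of_card_ge hQ
    rw [hcardQ, Nat.card_zpowers, hg]
  have hzcyc : IsCyclic (Subgroup.zpowers g) := by
    refine ⟨⟨⟨g, Subgroup.mem_zpowers g⟩, fun x => ?_⟩⟩
    obtain ⟨m, hm⟩ := x.2
    exact ⟨m, Subtype.ext (by simpa using hm)⟩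
  have hQcyc : IsCyclic Q := by
    rw [← hQeq]
    exact hzcyc
  -- transfer cyclicity through the Sylow isomorphism
  exact isCyclic_of_surjective (Sylow.equiv Q P) (Sylow.equiv Q P).surjective
end

section
/- Let G be a finite group of order n all of whose Sylow subgroups are cyclic (for every prime p, every Sylow p-subgroup of G is cyclic). If for every positive divisor d of n there exists a subgroup H of G such that exp_H(G) = d (i.e., d is the least positive integer m with xᵐ ∈ H for all x ∈ G), then G is cyclic. -/
lemma aux_card_dvd_exponent {G : Type*} [Group G] [Finite G]
    (hsylow : ∀ p : ℕ, p.Prime → ∀ P : Sylow p G, IsCyclic P) :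
    Nat.card G ∣ Monoid.exponent G := by
  have hcard : Nat.card G ≠ 0 := Nat.card_pos.ne'
  have hexp : Monoid.exponent G ≠ 0 := Monoid.exponent_ne_zero_of_finite
  rw [← Nat.factorization_le_iff_dvd hcard hexp, Finsupp.le_def]
  intro p
  by_cases hp : p.Prime
  · haveI : Fact p.Prime := ⟨hp⟩
    obtain ⟨P⟩ : Nonempty (Sylow p G) := inferInstance
    obtain ⟨g, hg⟩ := (hsylow p hp P).exists_generator
    have horder : orderOf (g : G) = p ^ (Nat.card G).factorization p := by
      rw [Subgroup.orderOf_coe, orderOf_eq_card_of_forall_mem_zpowers hg,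
        P.card_eq_multiplicity]
    have hdvd : p ^ (Nat.card G).factorization p ∣ Monoid.exponent G :=
      horder ▸ Monoid.order_dvd_exponent (g : G)
    exact (Nat.Prime.pow_dvd_iff_le_factorization hp hexp).mp hdvd
  · simp [Nat.factorization_eq_zero_of_not_prime _ hp]

theorem stmt_8 {G : Type*} [Group G] [Finite G] (n : ℕ) (hn : Nat.card G = n)
    (hsylow : ∀ p : ℕ, p.Prime → ∀ P : Sylow p G, IsCyclic P)
    (h : ∀ d : ℕ, 0 < d → d ∣ n →
      ∃ H : Subgroup G, IsLeast {m : ℕ | 0 < m ∧ ∀ x : G, x ^ m ∈ H} d) :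
    IsCyclic G := by
  subst hn
  have hcard0 : 0 < Nat.card G := Nat.card_pos
  -- Step 1: every Sylow subgroup is normal
  have hnormal : ∀ {p : ℕ} [Fact p.Prime] (P : Sylow p G), (P : Subgroup G).Normal := by
    intro p hp P
    set k := (Nat.card G).factorization p with hk
    have hpk_dvd : p ^ k ∣ Nat.card G := Nat.ordProj_dvd _ p
    set d := Nat.card G / p ^ k with hd
    have hdm : d * p ^ k = Nat.card G := Nat.div_mul_cancel hpk_dvd
    have hdpos : 0 < d :=
      Nat.div_pos (Nat.le_of_dvd hcard0 hpk_dvd) (pow_pos hp.out.pos k)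
    obtain ⟨H, ⟨-, hHd⟩, hHleast⟩ := h d hdpos (Nat.div_dvd_of_dvd hpk_dvd)
    set K := H.normalCore with hK
    haveI hKnormal : K.Normal := Subgroup.normalCore_normal H
    have hKd : ∀ x : G, x ^ d ∈ K := by
      intro x
      show ∀ b : G, b * x ^ d * b⁻¹ ∈ H
      intro b
      rw [← conj_pow]
      exact hHd _
    have hexpQ : Monoid.exponent (G ⧸ K) = d := by
      have h1 : Monoid.exponent (G ⧸ K) ∣ d := by
        apply Monoid.exponent_dvd_of_forall_pow_eq_one
        intro x
        induction x using QuotientGroup.induction_on with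
        | _ g =>
          rw [← QuotientGroup.mk_pow]
          exact (QuotientGroup.eq_one_iff _).mpr (hKd g)
      have h2 : d ≤ Monoid.exponent (G ⧸ K) := by
        apply hHleast
        refine ⟨Nat.pos_of_ne_zero Monoid.exponent_ne_zero_of_finite, fun x => ?_⟩
        have hx : ((x : G ⧸ K)) ^ Monoid.exponent (G ⧸ K) = 1 :=
          Monoid.pow_exponent_eq_one _
        have hx2 : x ^ Monoid.exponent (G ⧸ K) ∈ K := by
          rwa [← QuotientGroup.eq_one_iff, QuotientGroup.mk_pow]
        exact H.normalCore_le hx2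
      exact Nat.le_antisymm (Nat.le_of_dvd hdpos h1) h2
    have hsylowQ : ∀ q : ℕ, q.Prime → ∀ Q : Sylow q (G ⧸ K), IsCyclic Q := by
      intro q hq Q
      haveI : Fact q.Prime := ⟨hq⟩
      obtain ⟨P', rfl⟩ :=
        Sylow.mapSurjective_surjective (QuotientGroup.mk'_surjective K) q Q
      haveI : IsCyclic (P' : Subgroup G) := hsylow q hq P'
      rw [Sylow.coe_mapSurjective]
      exact isCyclic_of_surjective _ ((QuotientGroup.mk' K).subgroupMap_surjective (P' : Subgroup G))
    have h1 := aux_card_dvd_exponent hsylowQ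
    have h2 : Monoid.exponent (G ⧸ K) ∣ Nat.card (G ⧸ K) := Group.exponent_dvd_nat_card
    rw [hexpQ] at h1 h2
    have hcardQ : Nat.card (G ⧸ K) = d := Nat.dvd_antisymm h1 h2
    have hcards : Nat.card G = Nat.card (G ⧸ K) * Nat.card K :=
      Subgroup.card_eq_card_quotient_mul_card_subgroup K
    have hcardK : Nat.card K = p ^ k := by
      apply Nat.eq_of_mul_eq_mul_left hdpos
      rw [← hcardQ, ← hcards, hcardQ, hdm]
    obtain ⟨Q, hKQ⟩ := (IsPGroup.of_card hcardK).exists_le_sylow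
    have hQK : K = (Q : Subgroup G) :=
      Subgroup.eq_of_le_of_card_ge hKQ (le_of_eq (by rw [hcardK, Q.card_eq_multiplicity]))
    have hQnormal : (Q : Subgroup G).Normal := hQK ▸ hKnormal
    haveI : Unique (Sylow p G) := Sylow.unique_of_normal Q hQnormal
    have : P = Q := Subsingleton.elim P Q
    rw [this]
    exact hQnormal
  -- Step 2: G is the direct product of its Sylow subgroups
  let e := Sylow.directProductOfNormal hnormal
  letI : ∀ (p : (Nat.card G).primeFactors) (P : Sylow p G), CommGroup (P : Subgroup G) :=
    fun p P => (hsylow p (Nat.prime_of_mem_primeFactors p.2) P).commGroup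
  have hcomm : ∀ a b : G, a * b = b * a := by
    intro a b
    have := congrArg e (mul_comm (e.symm a) (e.symm b))
    simpa [map_mul] using this
  letI : CommGroup G := { (inferInstance : Group G) with mul_comm := hcomm }
  exact IsCyclic.of_exponent_eq_card
    (Nat.dvd_antisymm Group.exponent_dvd_nat_card (aux_card_dvd_exponent hsylow))
end

section
/- Let G be a group and μ : G → ℝ a function with 0 ≤ μ(x) ≤ 1 for all x ∈ G. Then μ is a fuzzy subgroup of G if and only if for every α ∈ ℝ with 0 ≤ α ≤ 1, the level subset {x ∈ G ∣ μ(x) ≥ α} is either empty or is (the carrier of) a subgroup of G. -/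
theorem stmt_13 {G : Type*} [Group G] (μ : G → ℝ)
    (hbound : ∀ x : G, 0 ≤ μ x ∧ μ x ≤ 1) :
    IsFuzzySubgroup μ ↔
      ∀ α : ℝ, 0 ≤ α → α ≤ 1 →
        {x : G | μ x ≥ α} = ∅ ∨
          ∃ H : Subgroup G, (H : Set G) = {x : G | μ x ≥ α} := by
  constructor
  · rintro ⟨-, hmul, hinv⟩ α _ _
    rcases Set.eq_empty_or_nonempty {x : G | μ x ≥ α} with h | ⟨x, hx⟩
    · exact Or.inl h
    · have hone : μ 1 ≥ α := by
        have h1 : μ (x * x⁻¹) ≥ min (μ x) (μ x⁻¹) := hmul x x⁻¹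
        rw [mul_inv_cancel] at h1
        exact le_trans (le_min hx (le_trans hx (hinv x))) h1
      exact Or.inr ⟨{ carrier := {x : G | μ x ≥ α}
                      mul_mem' := fun {a b} ha hb => le_trans (le_min ha hb) (hmul a b)
                      one_mem' := hone
                      inv_mem' := fun {a} ha => le_trans ha (hinv a) }, rfl⟩
  · intro h
    refine ⟨hbound, ?_, ?_⟩
    · intro x y
      set α := min (μ x) (μ y) with hα
      have h0 : 0 ≤ α := le_min (hbound x).1 (hbound y).1
      have h1 : α ≤ 1 := le_trans (min_le_left _ _) (hbound x).2
      rcases h α h0 h1 with he | ⟨H, hH⟩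
      · exfalso
        have : x ∈ {z : G | μ z ≥ α} := Set.mem_setOf.mpr (min_le_left _ _)
        rw [he] at this; exact this
      · have hx : x ∈ H := by rw [← SetLike.mem_coe, hH]; exact Set.mem_setOf.mpr (min_le_left _ _)
        have hy : y ∈ H := by rw [← SetLike.mem_coe, hH]; exact Set.mem_setOf.mpr (min_le_right _ _)
        have := H.mul_mem hx hy
        rw [← SetLike.mem_coe, hH] at this
        exact this
    · intro x
      rcases h (μ x) (hbound x).1 (hbound x).2 with he | ⟨H, hH⟩
      · exfalso
        have : x ∈ {z : G | μ z ≥ μ x} := Set.mem_setOf.mpr (le_refl _)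
        rw [he] at this; exact this
      · have hx : x ∈ H := by rw [← SetLike.mem_coe, hH]; exact Set.mem_setOf.mpr (le_refl _)
        have := H.inv_mem hx
        rw [← SetLike.mem_coe, hH] at this
        exact this
end

section
/- A finite group G of order n is cyclic if and only if for every positive divisor d of n there exists a fuzzy normal subgroup μ of G (a fuzzy subgroup additionally satisfying μ(x*y) = μ(y*x) for all x, y ∈ G) whose fuzzy order equals d, i.e., d is the least positive integer m such that μ(xᵐ) = μ(e) for all x ∈ G. -/
/-- A fuzzy normal subgroup: a fuzzy subgroup with `μ (x*y) = μ (y*x)`. -/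
def IsFuzzyNormalSubgroup {G : Type*} [Group G] (μ : G → ℝ) : Prop :=
  IsFuzzySubgroup μ ∧ ∀ x y : G, μ (x * y) = μ (y * x)

section Aux

open Subgroup

universe u

/-- The exponent of `G ⧸ N` is the least positive `m` with `x ^ m ∈ N` for all `x`. -/
lemma isLeast_exponent_quotient {G : Type u} [Group G] [Finite G] (N : Subgroup G) [N.Normal] :
    IsLeast {m : ℕ | 0 < m ∧ ∀ x : G, x ^ m ∈ N} (Monoid.exponent (G ⧸ N)) := by
  constructor
  · refine ⟨Nat.pos_of_dvd_of_pos Group.exponent_dvd_nat_card Nat.card_pos, fun x => ?_⟩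
    have h : ((x : G ⧸ N)) ^ Monoid.exponent (G ⧸ N) = 1 := Monoid.pow_exponent_eq_one _
    rwa [← QuotientGroup.mk_pow, QuotientGroup.eq_one_iff] at h
  · rintro m ⟨hm, hx⟩
    refine Nat.le_of_dvd hm ?_
    rw [Monoid.exponent_dvd_iff_forall_pow_eq_one]
    intro y
    induction y using QuotientGroup.induction_on with
    | _ z => rw [← QuotientGroup.mk_pow]; exact (QuotientGroup.eq_one_iff _).mpr (hx z)

/-- Key group-theoretic lemma: if for every positive divisor `d` of `|G|` there is a normal
subgroup whose quotient has exponent `d`, then `G` is cyclic. -/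
lemma isCyclic_of_forall_exponent_quotient :
    ∀ (n : ℕ) (G : Type u) [Group G] [Finite G], Nat.card G = n →
      (∀ d : ℕ, 0 < d → d ∣ n →
        ∃ N : Subgroup G, N.Normal ∧ IsLeast {m : ℕ | 0 < m ∧ ∀ x : G, x ^ m ∈ N} d) →
      IsCyclic G := by
  intro n
  induction n using Nat.strong_induction_on with
  | _ n ih =>
  intro G _ _ hn hyp
  have npos : 0 < n := hn ▸ Nat.card_pos
  rcases eq_or_ne n 1 with h1 | h1
  · haveI : Subsingleton G := (Nat.card_eq_one_iff_unique.mp (hn.trans h1)).1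
    infer_instance
  -- basic numerology
  set p := n.minFac with hpdef
  have hp : p.Prime := Nat.minFac_prime h1
  have hpn : p ∣ n := Nat.minFac_dvd n
  set m := n / p with hmdef
  have hpm : p * m = n := Nat.mul_div_cancel' hpn
  have mpos : 0 < m := Nat.div_pos (Nat.minFac_le npos) hp.pos
  have mlt : m < n := Nat.div_lt_self npos hp.one_lt
  have mdvd : m ∣ n := Nat.div_dvd_of_dvd hpn
  -- the exponent of G is n
  have expG : Monoid.exponent G = n := by
    obtain ⟨N0, hN0, hexp0⟩ := hyp n npos dvd_rfl
    haveI := hN0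
    have hexp0' : Monoid.exponent (G ⧸ N0) = n :=
      (isLeast_exponent_quotient N0).unique hexp0
    exact Nat.dvd_antisymm (hn ▸ Group.exponent_dvd_nat_card)
      (hexp0' ▸ MonoidHom.exponent_dvd (QuotientGroup.mk'_surjective N0))
  -- the subgroups generated by d-th powers
  set P : ℕ → Subgroup G := fun d => normalClosure {x : G | ∃ g : G, g ^ d = x} with hPdef
  have hPnormal : ∀ d, (P d).Normal := fun d => Subgroup.normalClosure_normal
  have hmem : ∀ d (x : G), x ^ d ∈ P d := fun d x => subset_normalClosure ⟨x, rfl⟩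
  have hPle : ∀ d (N : Subgroup G), N.Normal → (∀ x : G, x ^ d ∈ N) → P d ≤ N := by
    intro d N hN h
    haveI := hN
    exact normalClosure_le_normal (by rintro _ ⟨g, rfl⟩; exact h g)
  have hexpP : ∀ d : ℕ, 0 < d → d ∣ n → Monoid.exponent (G ⧸ P d) = d := by
    intro d hd hdn
    haveI := hPnormal d
    obtain ⟨N, hNnorm, hNexp0⟩ := hyp d hd hdn
    haveI := hNnorm
    have hNexp : Monoid.exponent (G ⧸ N) = d :=
      (isLeast_exponent_quotient N).unique hNexp0
    have hdN : ∀ x : G, x ^ d ∈ N := by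
      intro x
      have h : ((x : G ⧸ N)) ^ d = 1 := by rw [← hNexp]; exact Monoid.pow_exponent_eq_one _
      rwa [← QuotientGroup.mk_pow, QuotientGroup.eq_one_iff] at h
    have hle : P d ≤ N := hPle d N hNnorm hdN
    have hsurj : Function.Surjective
        (QuotientGroup.map (P d) N (MonoidHom.id G) (fun x hx => hle hx)) := by
      intro y
      induction y using QuotientGroup.induction_on with
      | _ z => exact ⟨z, rfl⟩
    have hd1 : d ∣ Monoid.exponent (G ⧸ P d) := by
      have h' := MonoidHom.exponent_dvd hsurj
      rwa [hNexp] at h'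
    have hd2 : Monoid.exponent (G ⧸ P d) ∣ d := by
      rw [Monoid.exponent_dvd_iff_forall_pow_eq_one]
      intro y
      induction y using QuotientGroup.induction_on with
      | _ z => rw [← QuotientGroup.mk_pow]; exact (QuotientGroup.eq_one_iff _).mpr (hmem d z)
    exact Nat.dvd_antisymm hd2 hd1
  -- the normal subgroup K of order p
  set K : Subgroup G := P m with hKdef
  haveI hKnormal : K.Normal := hPnormal m
  have hexpK : Monoid.exponent (G ⧸ K) = m := hexpP m mpos mdvd
  have hcard : n = Nat.card (G ⧸ K) * Nat.card K := by
    rw [← hn]; exact Subgroup.card_eq_card_quotient_mul_card_subgroup K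
  have hmdvdc : m ∣ Nat.card (G ⧸ K) := hexpK ▸ Group.exponent_dvd_nat_card
  obtain ⟨e, he⟩ := hmdvdc
  have hek : e * Nat.card K = p := by
    have h0 : m * p = m * (e * Nat.card K) := by
      rw [← mul_assoc, ← he, mul_comm m p, hpm, hcard]
    exact (Nat.eq_of_mul_eq_mul_left mpos h0).symm
  have hkdvd : Nat.card K ∣ p := Dvd.intro_left e hek
  rcases (Nat.Prime.eq_one_or_self_of_dvd hp _ hkdvd) with hk1 | hkp
  · -- K = ⊥ is impossible since exponent G = n > m
    exfalso
    have hKbot : K = ⊥ := Subgroup.card_eq_one.mp hk1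
    have : Monoid.exponent (G ⧸ K) = Monoid.exponent G :=
      Monoid.exponent_eq_of_mulEquiv
        ((QuotientGroup.quotientMulEquivOfEq hKbot).trans (QuotientGroup.quotientBot (G := G)))
    rw [hexpK, expG] at this
    omega
  -- so K has order p
  have hcQ : Nat.card (G ⧸ K) = m := by
    have : m * p = Nat.card (G ⧸ K) * p := by rw [mul_comm m p, hpm, hcard, hkp]
    exact (Nat.eq_of_mul_eq_mul_right hp.pos this).symm
  -- the quotient satisfies the hypothesis, hence is cyclic by induction
  have hypQ : ∀ d : ℕ, 0 < d → d ∣ m →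
      ∃ N' : Subgroup (G ⧸ K), N'.Normal ∧
        IsLeast {m' : ℕ | 0 < m' ∧ ∀ x : G ⧸ K, x ^ m' ∈ N'} d := by
    intro d hd hdm
    haveI := hPnormal d
    have hKle : K ≤ P d := by
      apply hPle m (P d) (hPnormal d)
      intro x
      obtain ⟨e', he'⟩ := hdm
      rw [he', pow_mul]
      exact Subgroup.pow_mem _ (hmem d x) e'
    have hNnorm' : ((P d).map (QuotientGroup.mk' K)).Normal :=
      Subgroup.Normal.map (hPnormal d) _ (QuotientGroup.mk'_surjective K)
    haveI := hNnorm'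
    refine ⟨(P d).map (QuotientGroup.mk' K), hNnorm', ?_⟩
    have hval : Monoid.exponent ((G ⧸ K) ⧸ (P d).map (QuotientGroup.mk' K)) = d := by
      rw [Monoid.exponent_eq_of_mulEquiv
        (QuotientGroup.quotientQuotientEquivQuotient K (P d) hKle)]
      exact hexpP d hd (hdm.trans mdvd)
    have := isLeast_exponent_quotient ((P d).map (QuotientGroup.mk' K))
    rwa [hval] at this
  have hcyclicQ : IsCyclic (G ⧸ K) := ih m mlt (G ⧸ K) hcQ hypQ
  -- K is central
  haveI : Fact p.Prime := ⟨hp⟩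
  haveI : IsCyclic K := isCyclic_of_prime_card hkp
  obtain ⟨a₀, ha₀⟩ := IsCyclic.exists_generator (α := K)
  have haord : orderOf (a₀ : G) = p := by
    rw [Subgroup.orderOf_coe, orderOf_eq_card_of_forall_mem_zpowers ha₀, hkp]
  have hcop : Nat.gcd n (p - 1) = 1 := by
    by_contra hne
    have hq := Nat.minFac_prime hne
    set q := (Nat.gcd n (p - 1)).minFac
    have hq1 : q ∣ n := (Nat.minFac_dvd _).trans (Nat.gcd_dvd_left _ _)
    have hq2 : q ∣ p - 1 := (Nat.minFac_dvd _).trans (Nat.gcd_dvd_right _ _)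
    have hle1 : p ≤ q := Nat.minFac_le_of_dvd hq.two_le hq1
    have hle2 : q ≤ p - 1 := Nat.le_of_dvd (by have := hp.two_le; omega) hq2
    have := hp.two_le
    omega
  have hconj : ∀ g : G, g * (a₀ : G) * g⁻¹ = (a₀ : G) := by
    intro g
    have hconjmem : g * (a₀ : G) * g⁻¹ ∈ K := hKnormal.conj_mem _ a₀.2 g
    have hmem' : (⟨g * (a₀ : G) * g⁻¹, hconjmem⟩ : K) ∈ Submonoid.powers a₀ :=
      mem_powers_iff_mem_zpowers.mpr (ha₀ _)
    obtain ⟨r, hr⟩ := hmem'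
    have hr' : g * (a₀ : G) * g⁻¹ = (a₀ : G) ^ r := by
      have := congrArg (Subtype.val) hr
      simpa using this.symm
    have hiter : ∀ s : ℕ, g ^ s * (a₀ : G) * (g ^ s)⁻¹ = (a₀ : G) ^ (r ^ s) := by
      intro s
      induction s with
      | zero => simp
      | succ s ihs =>
        have hstep : g ^ (s + 1) * (a₀ : G) * (g ^ (s + 1))⁻¹
            = g * (g ^ s * (a₀ : G) * (g ^ s)⁻¹) * g⁻¹ := by group
        rw [hstep, ihs, ← conj_pow, hr', ← pow_mul, ← pow_succ']
    set s := orderOf g with hsdef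
    have hspos : 0 < s := orderOf_pos g
    have hgs : g ^ s = 1 := pow_orderOf_eq_one g
    have h1 : (a₀ : G) ^ (1 : ℕ) = (a₀ : G) ^ (r ^ s) := by
      have := hiter s
      rw [hgs, one_mul, inv_one, mul_one] at this
      rw [pow_one]; exact this
    have hmod : 1 ≡ r ^ s [MOD p] := by
      rw [← haord]; exact (pow_eq_pow_iff_modEq).mp h1
    have hu : ((r : ZMod p)) ^ s = 1 := by
      have h2 : (((r ^ s : ℕ)) : ZMod p) = ((1 : ℕ) : ZMod p) :=
        (ZMod.natCast_eq_natCast_iff _ _ _).mpr hmod.symm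
      push_cast at h2
      exact h2
    obtain ⟨v, hv⟩ := IsUnit.of_pow_eq_one hu hspos.ne'
    have hvs : v ^ s = 1 := by
      ext
      push_cast
      rw [hv]
      exact hu
    have hv1 : orderOf v ∣ s := orderOf_dvd_of_pow_eq_one hvs
    have hv2 : orderOf v ∣ p - 1 := by
      have h3 := orderOf_dvd_card (x := v)
      rwa [ZMod.card_units] at h3
    have hsn : s ∣ n := hn ▸ orderOf_dvd_natCard g
    have hvd : orderOf v ∣ Nat.gcd n (p - 1) := Nat.dvd_gcd (hv1.trans hsn) hv2
    rw [hcop, Nat.dvd_one] at hvd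
    have hvone : v = 1 := orderOf_eq_one_iff.mp hvd
    have hr1 : (r : ZMod p) = ((1 : ℕ) : ZMod p) := by
      rw [← hv, hvone]; simp
    have hrmod : r ≡ 1 [MOD p] := (ZMod.natCast_eq_natCast_iff _ _ _).mp hr1
    have hfin : (a₀ : G) ^ r = (a₀ : G) ^ (1 : ℕ) := by
      rw [pow_eq_pow_iff_modEq, haord]; exact hrmod
    rw [hr', hfin, pow_one]
  have hacenter : (a₀ : G) ∈ Subgroup.center G := by
    rw [Subgroup.mem_center_iff]
    intro g
    have := hconj g
    calc g * (a₀ : G) = g * (a₀ : G) * g⁻¹ * g := by group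
    _ = (a₀ : G) * g := by rw [this]
  have hKcenter : K ≤ Subgroup.center G := by
    intro x hx
    obtain ⟨i, hi⟩ := Subgroup.mem_zpowers_iff.mp (ha₀ ⟨x, hx⟩)
    have hxi : (a₀ : G) ^ i = x := by
      have := congrArg (Subtype.val) hi
      simpa using this
    rw [← hxi]
    exact Subgroup.zpow_mem _ hacenter i
  -- conclude
  have hcomm : ∀ x y : G, x * y = y * x :=
    commutative_of_cyclic_center_quotient (QuotientGroup.mk' K)
      (by rw [QuotientGroup.ker_mk']; exact hKcenter)
  letI : CommGroup G := { (inferInstance : Group G) with mul_comm := hcomm }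
  exact IsCyclic.of_exponent_eq_card (by rw [hn]; exact expG)

end Aux

theorem stmt_17 {G : Type*} [Group G] [Finite G] (n : ℕ) (hn : Nat.card G = n) :
    IsCyclic G ↔
      ∀ d : ℕ, 0 < d → d ∣ n →
        ∃ μ : G → ℝ, IsFuzzyNormalSubgroup μ ∧
          IsLeast {m : ℕ | 0 < m ∧ ∀ x : G, μ (x ^ m) = μ 1} d := by
  have npos : 0 < n := hn ▸ Nat.card_pos
  constructor
  · -- forward: cyclic implies all fuzzy orders occur
    intro hcyc d hd hdn
    classical
    obtain ⟨g0, hg0⟩ := hcyc.exists_generator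
    have hcomm : ∀ x y : G, Commute x y := by
      intro x y
      obtain ⟨i, hi⟩ := Subgroup.mem_zpowers_iff.mp (hg0 x)
      obtain ⟨j, hj⟩ := Subgroup.mem_zpowers_iff.mp (hg0 y)
      rw [← hi, ← hj]
      exact (Commute.refl g0).zpow_zpow i j
    set k := n / d with hk
    have hdk : d * k = n := Nat.mul_div_cancel' hdn
    have hkpos : 0 < k := Nat.div_pos (Nat.le_of_dvd npos hdn) hd
    have key : ∀ u v : G, (u * v) ^ k = 1 → (v * u) ^ k = 1 := by
      intro u v h
      have hconj : v * u = u⁻¹ * (u * v) * u⁻¹⁻¹ := by group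
      rw [hconj, conj_pow, h]
      group
    refine ⟨fun x => if x ^ k = 1 then 1 else 0, ⟨⟨?_, ?_, ?_⟩, ?_⟩, ⟨⟨hd, ?_⟩, ?_⟩⟩
    · intro x; dsimp only; split <;> norm_num
    · intro x y
      by_cases hx : x ^ k = 1 <;> by_cases hy : y ^ k = 1 <;>
        simp [hx, hy, (hcomm x y).mul_pow] <;> split <;> norm_num
    · intro x; simp [inv_pow, inv_eq_one]
    · intro x y
      dsimp only
      by_cases h : (x * y) ^ k = 1
      · rw [if_pos h, if_pos (key x y h)]
      · rw [if_neg h, if_neg (fun h' => h (key y x h'))]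
    · intro x
      have hx : (x ^ d) ^ k = 1 := by
        rw [← pow_mul, hdk, ← hn]; exact pow_card_eq_one'
      simp [hx]
    · rintro m ⟨hm, hmall⟩
      have hall : ∀ x : G, x ^ (m * k) = 1 := by
        intro x
        rw [pow_mul]
        by_contra hne
        have h := hmall x
        simp [hne] at h
      have hdvd : Monoid.exponent G ∣ m * k :=
        Monoid.exponent_dvd_iff_forall_pow_eq_one.mpr hall
      rw [IsCyclic.exponent_eq_card, hn, ← hdk] at hdvd
      exact Nat.le_of_dvd hm ((Nat.mul_dvd_mul_iff_right hkpos).mp hdvd)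
  · -- converse
    intro h
    apply isCyclic_of_forall_exponent_quotient n G hn
    intro d hd hdn
    obtain ⟨μ, ⟨⟨hbd, hmul, hinv⟩, hnorm⟩, hleast⟩ := h d hd hdn
    have hle : ∀ x : G, μ x ≤ μ 1 := by
      intro x
      have h1 := hmul x x⁻¹
      rw [mul_inv_cancel, min_eq_left (hinv x)] at h1
      exact h1
    set N : Subgroup G :=
      { carrier := {x : G | μ x = μ 1}
        one_mem' := rfl
        mul_mem' := by
          intro x y hx hy
          simp only [Set.mem_setOf_eq] at hx hy ⊢
          refine le_antisymm (hle _) ?_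
          have h2 := hmul x y
          rwa [hx, hy, min_self] at h2
        inv_mem' := by
          intro x hx
          simp only [Set.mem_setOf_eq] at hx ⊢
          refine le_antisymm (hle _) ?_
          have h2 := hinv x
          rwa [hx] at h2 } with hNdef
    have hN : N.Normal := by
      constructor
      intro x hx g
      show μ (g * x * g⁻¹) = μ 1
      have h2 : μ (g * x * g⁻¹) = μ x := by
        rw [mul_assoc, hnorm g (x * g⁻¹), mul_assoc, inv_mul_cancel, mul_one]
      rw [h2]
      exact hx
    refine ⟨N, hN, ?_⟩
    have hsets : {m : ℕ | 0 < m ∧ ∀ x : G, x ^ m ∈ N}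
        = {m : ℕ | 0 < m ∧ ∀ x : G, μ (x ^ m) = μ 1} := rfl
    rw [hsets]
    exact hleast
end
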